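/- Let γ be the normal prior density component γ(μ;b,c) = (b/√(2π))exp(−b²(μ−c)²/2), and consider the spike-and-slab prior (1−w)δ₀ + wγ(·;b,c) with X|μ ∼ N(μ,1). Then the posterior median δ(x;w,b,c) satisfies δ(x;w,b,c) − (x/b² + c)/(1/b² + 1) → 0 as |x| → ∞. -/

import Mathlib

open MeasureTheory Real

/-- Standard normal density. -/
noncomputable def stdN (x : ℝ) : ℝ := (Real.sqrt (2 * Real.pi))⁻¹ * Real.exp (-x ^ 2 / 2)

/-- Convolution `g(x;c) = ∫ φ(x−μ) γ₀(μ−c) dμ`. -/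
noncomputable def conv (γ₀ : ℝ → ℝ) (c x : ℝ) : ℝ := ∫ μ : ℝ, stdN (x - μ) * γ₀ (μ - c)

/-- Marginal density `m(x;w,c) = (1−w)φ(x) + w g(x;c)`. -/
noncomputable def marg (γ₀ : ℝ → ℝ) (w c x : ℝ) : ℝ := (1 - w) * stdN x + w * conv γ₀ c x

/-- Posterior CDF of `μ` given `X = x` under the prior `(1−w)δ₀ + w γ₀(·−c)`
and likelihood `X | μ ∼ N(μ,1)`. -/
noncomputable def postCDF (γ₀ : ℝ → ℝ) (w c x t : ℝ) : ℝ :=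
  ((1 - w) * stdN x * (if (0:ℝ) ≤ t then 1 else 0)
    + w * ∫ μ in Set.Iic t, stdN (x - μ) * γ₀ (μ - c)) / marg γ₀ w c x

/-- Posterior median. -/
noncomputable def postMedian (γ₀ : ℝ → ℝ) (w c x : ℝ) : ℝ :=
  sInf {t : ℝ | 1 / 2 ≤ postCDF γ₀ w c x t}

/-- Standard normal slab density with precision parameter `b` (centered at 0):
`γ₀(μ) = (b/√(2π)) exp(−b²μ²/2)`; the shifted slab is `γ(μ;b,c) = γ₀(μ−c)`. -/
noncomputable def normSlab (b μ : ℝ) : ℝ :=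
  b / Real.sqrt (2 * Real.pi) * Real.exp (-(b ^ 2) * μ ^ 2 / 2)

/-!
Completing the square in `μ`, likelihood times slab factors as `φ_{c,1/b²+1}(x)` times the
`N(m(x), 1/(1+b²))` density, where `m(x) = (x + b²c)/(1 + b²)`. So the posterior CDF is
`(r·1{t ≥ 0} + G·Φ(√(1+b²)(t − m(x)))) / (r + G)` with `r = (1−w)φ(x)` and
`G = w φ_{c,1/b²+1}(x)`. As `1/b² + 1 > 1`, `r/G → 0` when `|x| → ∞`; once
`r < G(2Φ(√(1+b²)ε) − 1)` the posterior CDF is below `1/2` at `m(x) − ε` and at least `1/2` at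
`m(x) + ε`, so the median lies within `ε` of `m(x)`.
-/

open Set Filter Topology ProbabilityTheory

lemma stdN_eq_gaussianPDFReal : stdN = gaussianPDFReal 0 1 := by
  funext x; simp [stdN, gaussianPDFReal]

lemma stdN_pos (x : ℝ) : 0 < stdN x := by
  rw [stdN_eq_gaussianPDFReal]; exact gaussianPDFReal_pos _ _ _ one_ne_zero

lemma integrable_stdN : Integrable stdN := by
  rw [stdN_eq_gaussianPDFReal]; exact integrable_gaussianPDFReal _ _

lemma integral_stdN : ∫ x, stdN x = 1 := by
  rw [stdN_eq_gaussianPDFReal]; exact integral_gaussianPDFReal_eq_one _ one_ne_zero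

noncomputable def stdNCDF (t : ℝ) : ℝ := ∫ u in Iic t, stdN u

lemma stdNCDF_mono : Monotone stdNCDF := fun _ _ hst =>
  setIntegral_mono_set integrable_stdN.integrableOn (.of_forall fun x => (stdN_pos x).le)
    (Iic_subset_Iic.2 hst).eventuallyLE

lemma stdNCDF_add_setIntegral_Ioi (t : ℝ) : stdNCDF t + ∫ x in Ioi t, stdN x = 1 := by
  rw [stdNCDF, intervalIntegral.integral_Iic_add_Ioi integrable_stdN.integrableOn
    integrable_stdN.integrableOn, integral_stdN]

lemma stdNCDF_neg (a : ℝ) : stdNCDF (-a) = 1 - stdNCDF a := by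
  have hsymm : stdNCDF (-a) = ∫ x in Iic (-a), stdN (-x) := by simp [stdNCDF, stdN]
  rw [hsymm, integral_comp_neg_Iic, neg_neg, ← stdNCDF_add_setIntegral_Ioi a]
  ring

lemma half_lt_stdNCDF {a : ℝ} (ha : 0 < a) : 1 / 2 < stdNCDF a := by
  have hzero : stdNCDF 0 = 1 / 2 := by linarith [neg_zero (G := ℝ) ▸ stdNCDF_neg 0]
  have hdiff : stdNCDF a - stdNCDF 0 = ∫ x in (0 : ℝ)..a, stdN x :=
    intervalIntegral.integral_Iic_sub_Iic integrable_stdN.integrableOn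
      integrable_stdN.integrableOn
  have hpos : 0 < ∫ x in (0 : ℝ)..a, stdN x :=
    intervalIntegral.intervalIntegral_pos_of_pos integrable_stdN.intervalIntegrable stdN_pos ha
  linarith

lemma integral_stdN_affine {a : ℝ} (ha : 0 < a) (m : ℝ) :
    ∫ μ, a * stdN (a * (μ - m)) = 1 := by
  rw [integral_const_mul, integral_sub_right_eq_self (fun u => stdN (a * u)) m,
    Measure.integral_comp_mul_left stdN a, integral_stdN, abs_of_pos (inv_pos.2 ha), smul_eq_mul]
  field_simp

lemma setIntegral_Iic_stdN_affine {a : ℝ} (ha : 0 < a) (m t : ℝ) :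
    ∫ μ in Iic t, a * stdN (a * (μ - m)) = stdNCDF (a * (t - m)) := by
  have hshift : ∫ μ in Iic t, stdN (a * (μ - m)) = ∫ μ in Iic (t - m), stdN (a * μ) := by
    rw [← integral_indicator measurableSet_Iic, ← integral_indicator measurableSet_Iic,
      ← integral_sub_right_eq_self ((Iic (t - m)).indicator fun μ => stdN (a * μ)) m]
    congr 1 with μ
    simp only [indicator_apply, mem_Iic, sub_le_sub_iff_right]
  have hscale := Measure.setIntegral_comp_smul_of_pos volume stdN (Iic (t - m)) ha
  simp only [smul_eq_mul, Module.finrank_self, pow_one, LinearOrderedField.smul_Iic ha] at hscale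
  rw [integral_const_mul, hshift, hscale, stdNCDF]
  field_simp

/-- Posterior mean of `μ` under the slab alone; the paper's `(τx + c)/(τ + 1)` with `τ = 1/b²`. -/
noncomputable def slabPostMean (b c x : ℝ) : ℝ := (x + b ^ 2 * c) / (1 + b ^ 2)

/-- The `N(c, 1/b² + 1)` density `φ_{c,1/b²+1}`. -/
noncomputable def slabMarg (b c x : ℝ) : ℝ :=
  b / √(1 + b ^ 2) * stdN ((x - c) * (b / √(1 + b ^ 2)))

/-- Completing the square in `μ`. -/
lemma stdN_mul_normSlab {b : ℝ} (hb : 0 < b) (c x μ : ℝ) :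
    stdN (x - μ) * normSlab b (μ - c) =
      slabMarg b c x * (√(1 + b ^ 2) * stdN (√(1 + b ^ 2) * (μ - slabPostMean b c x))) := by
  have hs : √(1 + b ^ 2) ^ 2 = 1 + b ^ 2 := sq_sqrt (by positivity)
  have hexp : -(x - μ) ^ 2 / 2 + -(b ^ 2) * (μ - c) ^ 2 / 2 =
      -((x - c) * (b / √(1 + b ^ 2))) ^ 2 / 2 +
        -(√(1 + b ^ 2) * (μ - slabPostMean b c x)) ^ 2 / 2 := by
    simp only [slabPostMean, mul_pow, div_pow, hs]
    field_simp
    ring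
  simp only [stdN, normSlab, slabMarg]
  rw [mul_mul_mul_comm, ← exp_add, hexp, exp_add]
  field_simp

lemma conv_normSlab {b : ℝ} (hb : 0 < b) (c x : ℝ) : conv (normSlab b) c x = slabMarg b c x := by
  simp only [conv, stdN_mul_normSlab hb]
  rw [integral_const_mul, integral_stdN_affine (sqrt_pos.2 (by positivity)), mul_one]

lemma setIntegral_Iic_stdN_mul_normSlab {b : ℝ} (hb : 0 < b) (c x t : ℝ) :
    ∫ μ in Iic t, stdN (x - μ) * normSlab b (μ - c) =
      slabMarg b c x * stdNCDF (√(1 + b ^ 2) * (t - slabPostMean b c x)) := by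
  simp only [stdN_mul_normSlab hb]
  rw [integral_const_mul, setIntegral_Iic_stdN_affine (sqrt_pos.2 (by positivity))]

lemma postCDF_normSlab {b : ℝ} (hb : 0 < b) (w c x : ℝ) :
    postCDF (normSlab b) w c x = fun t =>
      ((1 - w) * stdN x * (if (0 : ℝ) ≤ t then 1 else 0)
        + w * slabMarg b c x * stdNCDF (√(1 + b ^ 2) * (t - slabPostMean b c x)))
        / ((1 - w) * stdN x + w * slabMarg b c x) := by
  funext t
  rw [postCDF, marg, conv_normSlab hb, setIntegral_Iic_stdN_mul_normSlab hb]
  ring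

lemma abs_sInf_sub_le_of_monotone {F : ℝ → ℝ} (hF : Monotone F) {q m ε : ℝ}
    (hup : q ≤ F (m + ε)) (hlow : F (m - ε) < q) : |sInf {t | q ≤ F t} - m| ≤ ε := by
  have hlb : ∀ t ∈ {t | q ≤ F t}, m - ε ≤ t := fun t ht =>
    le_of_not_gt fun h => not_le.2 ((hF h.le).trans_lt hlow) ht
  have h₁ : sInf {t | q ≤ F t} ≤ m + ε := csInf_le ⟨m - ε, hlb⟩ hup
  have h₂ : m - ε ≤ sInf {t | q ≤ F t} := le_csInf ⟨m + ε, hup⟩ hlb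
  exact abs_sub_le_iff.2 ⟨by linarith, by linarith⟩

lemma abs_postMedian_normSlab_sub_le {b w c x ε : ℝ} (hb : 0 < b) (hw : 0 < w) (hw1 : w ≤ 1)
    (hx : stdN x / slabMarg b c x < w * (2 * stdNCDF (√(1 + b ^ 2) * ε) - 1)) :
    |postMedian (normSlab b) w c x - slabPostMean b c x| ≤ ε := by
  set s := √(1 + b ^ 2)
  set m := slabPostMean b c x
  set r := (1 - w) * stdN x
  set G := w * slabMarg b c x
  set A := stdNCDF (s * ε)
  have hs : 0 < s := sqrt_pos.2 (by positivity)
  have hr : 0 ≤ r := mul_nonneg (by linarith) (stdN_pos x).le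
  have hg : 0 < slabMarg b c x := mul_pos (div_pos hb hs) (stdN_pos _)
  have hG : 0 < G := mul_pos hw hg
  have hrG : r < G * (2 * A - 1) := by
    have := (div_lt_iff₀ hg).1 hx
    have : r ≤ stdN x := mul_le_of_le_one_left (stdN_pos x).le (by linarith)
    simp only [G]; nlinarith
  have hind : Monotone fun t : ℝ => if (0 : ℝ) ≤ t then (1 : ℝ) else 0 := by
    intro t₁ t₂ h; dsimp only; split_ifs <;> linarith
  have hmono : Monotone (postCDF (normSlab b) w c x) := by
    rw [postCDF_normSlab hb]
    exact ((hind.const_mul hr).add ((stdNCDF_mono.comp fun t₁ t₂ h =>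
      mul_le_mul_of_nonneg_left (sub_le_sub_right h m) hs.le).const_mul hG.le)).div_const
        (by positivity)
  apply abs_sInf_sub_le_of_monotone hmono
  · rw [postCDF_normSlab hb]
    dsimp only
    rw [le_div_iff₀ (by positivity), add_sub_cancel_left]
    split_ifs <;> nlinarith
  · rw [postCDF_normSlab hb]
    dsimp only
    rw [div_lt_iff₀ (by positivity), sub_sub_cancel_left, mul_neg, stdNCDF_neg]
    split_ifs <;> nlinarith

lemma stdN_div_slabMarg {b : ℝ} (hb : 0 < b) (c x : ℝ) :
    stdN x / slabMarg b c x =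
      √(1 + b ^ 2) / b * exp (b ^ 2 * c ^ 2 / 2 - (x + b ^ 2 * c) ^ 2 / (2 * (1 + b ^ 2))) := by
  have hs : √(1 + b ^ 2) ^ 2 = 1 + b ^ 2 := sq_sqrt (by positivity)
  have hexp : -x ^ 2 / 2 = b ^ 2 * c ^ 2 / 2 - (x + b ^ 2 * c) ^ 2 / (2 * (1 + b ^ 2)) +
      -((x - c) * (b / √(1 + b ^ 2))) ^ 2 / 2 := by
    simp only [mul_pow, div_pow, hs]
    field_simp
    ring
  simp only [stdN, slabMarg]
  rw [hexp, exp_add]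
  field_simp

lemma tendsto_sq_add_const_cocompact (k : ℝ) :
    Tendsto (fun x : ℝ => (x + k) ^ 2) (cocompact ℝ) atTop := by
  have h := tendsto_norm_cocompact_atTop.comp
    (Homeomorph.addRight k).isClosedEmbedding.tendsto_cocompact
  refine ((tendsto_pow_atTop two_ne_zero).comp h).congr fun x => ?_
  simp

lemma tendsto_stdN_div_slabMarg {b : ℝ} (hb : 0 < b) (c : ℝ) :
    Tendsto (fun x => stdN x / slabMarg b c x) (cocompact ℝ) (𝓝 0) := by
  have hexponent := tendsto_atBot_add_const_left _ (b ^ 2 * c ^ 2 / 2)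
    (tendsto_neg_atTop_atBot.comp ((tendsto_sq_add_const_cocompact (b ^ 2 * c)).atTop_div_const
      (by positivity : (0 : ℝ) < 2 * (1 + b ^ 2))))
  simpa [stdN_div_slabMarg hb, ← sub_eq_add_neg] using
    (tendsto_exp_atBot.comp hexponent).const_mul (√(1 + b ^ 2) / b)

/-- With the normal slab `γ(μ;b,c)` and spike-and-slab prior `(1−w)δ₀ + wγ(·;b,c)`,
the posterior median satisfies `δ(x;w,b,c) − (x/b² + c)/(1/b² + 1) → 0` as `|x| → ∞`. -/
theorem stmt5 (w b c : ℝ) (hb : 0 < b) (hw : 0 < w) (hw1 : w ≤ 1) :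
    Filter.Tendsto
      (fun x : ℝ => postMedian (normSlab b) w c x - (x / b ^ 2 + c) / (1 / b ^ 2 + 1))
      (Filter.cocompact ℝ) (nhds 0) := by
  rw [Metric.tendsto_nhds]
  intro ε hε
  have hgap : 0 < w * (2 * stdNCDF (√(1 + b ^ 2) * (ε / 2)) - 1) := by
    have := half_lt_stdNCDF (mul_pos (sqrt_pos.2 (by positivity : (0 : ℝ) < 1 + b ^ 2))
      (half_pos hε))
    exact mul_pos hw (by linarith)
  filter_upwards [(tendsto_stdN_div_slabMarg hb c).eventually (gt_mem_nhds hgap)] with x hx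
  have hmean : (x / b ^ 2 + c) / (1 / b ^ 2 + 1) = slabPostMean b c x := by
    rw [slabPostMean]; field_simp
  rw [dist_zero_right, norm_eq_abs, hmean]
  exact (abs_postMedian_normSlab_sub_le hb hw hw1 hx).trans_lt (half_lt_self hε)
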